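/- Let X, Y be strings with |Y| = |X| + 2K, let m = |X|, and define D[i,j] = min_{0 ≤ s' ≤ 2K} ED(X[0..i], Y[s'..j]). Then for every s ∈ {−K,…,K}: D[m, m+K+s] ≤ ED(X, Y_s) ≤ 2·D[m, m+K+s], where Y_s = Y[K+s .. m+K+s]. -/

import Mathlib

/-- The substring of `X` with indices in `{i, ..., j-1}` (out-of-bounds indices clipped). -/
def listSub {α : Type*} (X : List α) (i j : ℕ) : List α := (X.take j).drop i

/-- Substring with possibly negative (integer) endpoints, clipped. -/
def listSubZ {α : Type*} (X : List α) (i j : ℤ) : List α := listSub X i.toNat j.toNat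

/-! The Levenshtein machinery below was removed from Mathlib (`Mathlib/Data/List/EditDistance/Defs.lean`);
it is reproduced here with its old definitions. -/

namespace Levenshtein

/-- Costs of the edit operations (as in the old Mathlib). -/
structure Cost (α β δ : Type*) where
  delete : α → δ
  insert : β → δ
  substitute : α → β → δ

/-- Unit costs (as in the old Mathlib). -/
def defaultCost {α : Type*} [DecidableEq α] : Cost α α ℕ where
  delete _ := 1
  insert _ := 1
  substitute a b := if a = b then 0 else 1

/-- One row step of the old Mathlib algorithm. -/
def impl {α β δ : Type*} [AddZeroClass δ] [Min δ] (C : Cost α β δ)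
    (xs : List α) (y : β) (d : {r : List δ // 0 < r.length}) : {r : List δ // 0 < r.length} :=
  let ⟨ds, w⟩ := d
  xs.zip (ds.zip ds.tail) |>.foldr
    (init := ⟨[ds.getLast (List.length_pos_iff.mp w) + C.insert y], by simp⟩)
    (fun ⟨x, d₀, d₁⟩ ⟨r, w⟩ =>
      ⟨min (C.delete x + r[0]'w) (min (C.insert y + d₀) (C.substitute x y + d₁)) :: r, by simp⟩)

end Levenshtein

open Levenshtein in
/-- Old Mathlib `suffixLevenshtein`. -/
def suffixLevenshtein {α β δ : Type*} [AddZeroClass δ] [Min δ] (C : Cost α β δ)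
    (xs : List α) (ys : List β) : {r : List δ // 0 < r.length} :=
  ys.foldr
    (impl C xs)
    (xs.foldr (init := ⟨[0], by simp⟩) (fun a ⟨r, w⟩ => ⟨(C.delete a + r[0]'w) :: r, by simp⟩))

open Levenshtein in
/-- Old Mathlib `levenshtein`. -/
def levenshtein {α β δ : Type*} [AddZeroClass δ] [Min δ] (C : Cost α β δ)
    (xs : List α) (ys : List β) : δ :=
  let ⟨r, w⟩ := suffixLevenshtein C xs ys
  r[0]'w

/-- Edit distance (Levenshtein distance) with unit costs. -/
def ED {α : Type*} [DecidableEq α] (X Y : List α) : ℕ :=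
  levenshtein Levenshtein.defaultCost X Y

/-! The lower bound is the choice `s' = K + s`. For the upper bound, let `s'` attain the minimum
`D = ED(X, Y[s'..j])`, `j = m + K + s`. Both `Y_s` and `Y[s'..j]` are suffixes of `Y[0..j]`, so one
arises from the other by adding or deleting `|s' - (K + s)|` leading symbols, whence
`ED(X, Y_s) ≤ D + |s' - (K + s)|`. Since `|Y_s| = |X|`, that number is the length difference of
`X` and `Y[s'..j]`, which is at most `D`. -/

namespace Levenshtein

variable {α β δ : Type*} [AddZeroClass δ] [Min δ] (C : Cost α β δ)

theorem impl_cons {x : α} {xs : List α} {y : β} {d : δ} {ds : List δ}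
    (w : 0 < (d :: ds).length) (hds : 0 < ds.length) :
    impl C (x :: xs) y ⟨d :: ds, w⟩ =
      ⟨min (C.delete x + (impl C xs y ⟨ds, hds⟩).1[0]'(impl C xs y ⟨ds, hds⟩).2)
        (min (C.insert y + d) (C.substitute x y + ds[0]'hds)) :: (impl C xs y ⟨ds, hds⟩).1,
        by simp⟩ :=
  match ds, hds with | _ :: _, _ => rfl

theorem impl_length (xs : List α) (y : β) (d : {r : List δ // 0 < r.length})
    (w : d.1.length = xs.length + 1) : (impl C xs y d).1.length = xs.length + 1 := by
  induction xs generalizing d with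
  | nil => rfl
  | cons x xs ih =>
    obtain ⟨_ | ⟨d₀, _ | ⟨d₁, ds⟩⟩, hw⟩ := d
    · simp at hw
    · simp at w
    · rw [impl_cons C hw (by simp)]
      simpa using ih ⟨d₁ :: ds, by simp⟩ (by simpa using w)

end Levenshtein

open Levenshtein

section LevenshteinEquations

variable {α β δ : Type*} [AddZeroClass δ] [Min δ] (C : Cost α β δ)

theorem suffixLevenshtein_length (xs : List α) (ys : List β) :
    (suffixLevenshtein C xs ys).1.length = xs.length + 1 := by
  induction ys with
  | nil =>
    induction xs with
    | nil => rfl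
    | cons x xs ih => exact congrArg Nat.succ ih
  | cons y ys ih => exact impl_length C xs y _ ih

theorem suffixLevenshtein_cons₁ (x : α) (xs : List α) (ys : List β) :
    suffixLevenshtein C (x :: xs) ys =
      ⟨levenshtein C (x :: xs) ys :: (suffixLevenshtein C xs ys).1, by simp⟩ := by
  induction ys with
  | nil => rfl
  | cons y ys ih =>
    have htail : (suffixLevenshtein C (x :: xs) (y :: ys)).1.tail =
        (suffixLevenshtein C xs (y :: ys)).1 := by
      show (impl C (x :: xs) y (suffixLevenshtein C (x :: xs) ys)).1.tail = _
      rw [ih, impl_cons C _ (by simp [suffixLevenshtein_length])]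
      rfl
    apply Subtype.ext
    change _ = (suffixLevenshtein C (x :: xs) (y :: ys)).1[0]'(by simp [suffixLevenshtein_length])
      :: _
    rw [← htail, List.getElem_zero, List.cons_head_tail]

theorem suffixLevenshtein_nil (ys : List β) :
    (suffixLevenshtein C [] ys).1 = [levenshtein C ([] : List α) ys] := by
  have h := suffixLevenshtein_length C ([] : List α) ys
  show _ = [(suffixLevenshtein C [] ys).1[0]'(by simp [h])]
  generalize suffixLevenshtein C [] ys = r at h
  obtain ⟨_ | ⟨a, _ | ⟨b, l⟩⟩, hl⟩ := r
  · simp at hl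
  · rfl
  · simp at h

theorem levenshtein_nil_cons (y : β) (ys : List β) :
    levenshtein C ([] : List α) (y :: ys) = levenshtein C [] ys + C.insert y := by
  show (impl C [] y (suffixLevenshtein C [] ys)).1[0]'(impl C [] y _).2 = _
  have h := suffixLevenshtein_nil C ys
  generalize suffixLevenshtein C [] ys = r at h
  obtain ⟨l, hl⟩ := r
  subst h
  rfl

theorem levenshtein_cons_nil (x : α) (xs : List α) :
    levenshtein C (x :: xs) ([] : List β) = C.delete x + levenshtein C xs [] := rfl

theorem levenshtein_cons_cons (x : α) (xs : List α) (y : β) (ys : List β) :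
    levenshtein C (x :: xs) (y :: ys) =
      min (C.delete x + levenshtein C xs (y :: ys))
        (min (C.insert y + levenshtein C (x :: xs) ys)
          (C.substitute x y + levenshtein C xs ys)) := by
  show (impl C (x :: xs) y (suffixLevenshtein C (x :: xs) ys)).1[0]'(impl C _ y _).2 = _
  rw [suffixLevenshtein_cons₁ C x xs ys,
    impl_cons C _ (by simp [suffixLevenshtein_length])]
  rfl

end LevenshteinEquations

section EditDistance

variable {α : Type*} [DecidableEq α]

@[simp] theorem ED_nil_cons (y : α) (B : List α) : ED [] (y :: B) = ED [] B + 1 :=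
  levenshtein_nil_cons _ y B

@[simp] theorem ED_cons_nil (x : α) (A : List α) : ED (x :: A) [] = 1 + ED A [] :=
  levenshtein_cons_nil _ x A

theorem ED_cons_cons (x : α) (A : List α) (y : α) (B : List α) :
    ED (x :: A) (y :: B) =
      min (1 + ED A (y :: B)) (min (1 + ED (x :: A) B) ((if x = y then 0 else 1) + ED A B)) :=
  levenshtein_cons_cons _ x A y B

@[simp] theorem ED_nil_left (B : List α) : ED [] B = B.length := by
  induction B with
  | nil => rfl
  | cons y B ih => simp [ih]

theorem ED_cons_left_le (x : α) (A B : List α) : ED (x :: A) B ≤ 1 + ED A B := by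
  cases B with
  | nil => simp
  | cons y B => rw [ED_cons_cons]; exact min_le_left _ _

theorem ED_le_ED_cons_right (A : List α) (y : α) (B : List α) :
    ED A B ≤ ED A (y :: B) + 1 := by
  induction A with
  | nil => simp; omega
  | cons x A ih =>
    rw [ED_cons_cons]
    have := ED_cons_left_le x A B
    split_ifs <;> omega

theorem ED_cons_right_le (A : List α) (y : α) (B : List α) : ED A (y :: B) ≤ ED A B + 1 := by
  cases A with
  | nil => simp
  | cons x A =>
    rw [ED_cons_cons]
    omega

theorem length_left_le_ED_add_length (A B : List α) : A.length ≤ ED A B + B.length := by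
  induction A generalizing B with
  | nil => simp
  | cons x A ihA =>
    induction B with
    | nil => simpa [Nat.add_comm] using ihA []
    | cons y B ihB =>
      rw [ED_cons_cons]
      have := ihA (y :: B)
      have := ihA B
      simp only [List.length_cons] at *
      split_ifs <;> omega

theorem length_right_le_ED_add_length (A B : List α) : B.length ≤ ED A B + A.length := by
  induction A generalizing B with
  | nil => simp
  | cons x A ihA =>
    induction B with
    | nil => simp
    | cons y B ihB =>
      rw [ED_cons_cons]
      have := ihA (y :: B)
      have := ihA B
      simp only [List.length_cons] at *
      split_ifs <;> omega

theorem ED_append_left_le (A t B : List α) : ED A (t ++ B) ≤ ED A B + t.length := by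
  induction t with
  | nil => simp
  | cons y t ih =>
    have := ED_cons_right_le A y (t ++ B)
    simp only [List.cons_append, List.length_cons]
    omega

theorem ED_le_ED_append_left (A t B : List α) : ED A B ≤ ED A (t ++ B) + t.length := by
  induction t with
  | nil => simp
  | cons y t ih =>
    have := ED_le_ED_cons_right A y (t ++ B)
    simp only [List.cons_append, List.length_cons]
    omega

theorem ED_le_two_mul_ED_of_isSuffix {A B B' : List α} (hB : B.length = A.length)
    (h : B' <:+ B ∨ B <:+ B') : ED A B ≤ 2 * ED A B' := by
  rcases h with ⟨t, rfl⟩ | ⟨t, rfl⟩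
  · have := ED_append_left_le A t B'
    have := length_left_le_ED_add_length A B'
    simp only [List.length_append] at hB
    omega
  · have := ED_le_ED_append_left A t B
    have := length_right_le_ED_add_length A (t ++ B)
    simp only [List.length_append] at this
    omega

end EditDistance

/-- The dynamic-programming table `D[i,j] = min_{0 ≤ s' ≤ 2K} ED(X[0..i], Y[s'..j])`
gives a 2-approximation of `ED(X, Y_s)` at `D[m, m+K+s]`:
`D[m, m+K+s] ≤ ED(X, Y_s) ≤ 2·D[m, m+K+s]` where `Y_s = Y[K+s..m+K+s]`. -/
theorem dp_two_approximation {α : Type*} [DecidableEq α]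
    (X Y : List α) (K : ℕ) (hlen : Y.length = X.length + 2 * K)
    (s : ℤ) (hs1 : -(K : ℤ) ≤ s) (hs2 : s ≤ K) :
    sInf {d : ℕ | ∃ s' ≤ 2 * K,
        d = ED X (listSubZ Y (s' : ℤ) ((X.length : ℤ) + K + s))}
      ≤ ED X (listSubZ Y ((K : ℤ) + s) ((X.length : ℤ) + K + s)) ∧
    ED X (listSubZ Y ((K : ℤ) + s) ((X.length : ℤ) + K + s))
      ≤ 2 * sInf {d : ℕ | ∃ s' ≤ 2 * K,
        d = ED X (listSubZ Y (s' : ℤ) ((X.length : ℤ) + K + s))} := by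
  set k := ((K : ℤ) + s).toNat
  set L := Y.take (X.length + k)
  have hend : ((X.length : ℤ) + K + s).toNat = X.length + k := by omega
  have hsub (i : ℕ) : listSubZ Y i ((X.length : ℤ) + K + s) = L.drop i := by
    simp [listSubZ, listSub, L, hend]
  have hYs : listSubZ Y ((K : ℤ) + s) ((X.length : ℤ) + K + s) = L.drop k := by
    rw [← hsub, Int.toNat_of_nonneg (by omega)]
  simp only [hsub, hYs]
  have hmem : ED X (L.drop k) ∈ {d | ∃ s' ≤ 2 * K, d = ED X (L.drop s')} :=
    ⟨k, by omega, rfl⟩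
  obtain ⟨s', -, hd⟩ := Nat.sInf_mem ⟨_, hmem⟩
  refine ⟨Nat.sInf_le hmem, hd ▸ ED_le_two_mul_ED_of_isSuffix ?_ ?_⟩
  · simp [L]
    omega
  · exact (le_total k s').imp L.drop_suffix_drop_left L.drop_suffix_drop_left
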